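/- Let s ≥ 7 and let Z be a set of s points of P^1 x P^1 in multiplicity 1 generic position, with I = I(Z). Write s = 2*q1 + r1 with 0 ≤ r1 ≤ 1 and s = 3*q2 + r2 with 0 ≤ r2 ≤ 2. Then the bigraded piece of I^2 of bidegree (3, q1+q2) satisfies dim_k (I^2)_(3, q1+q2) ≤ (2 - r1)(3 - r2). -/
import Mathlib


open MvPolynomial

noncomputable section

/-- The weights giving the bigrading on `k[x0,x1,y0,y1]` with
`deg x0 = deg x1 = (1,0)` and `deg y0 = deg y1 = (0,1)`. -/
def w4 : Fin 4 → ℕ × ℕ := ![(1,0), (1,0), (0,1), (0,1)]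

variable (k : Type*) [Field k]

/-- `p = ((a0,a1),(b0,b1))` represents a point `[a0:a1] × [b0:b1]` of `P^1 × P^1`
if neither pair of coordinates is identically zero. -/
def IsPtRep (p : (k × k) × (k × k)) : Prop := p.1 ≠ 0 ∧ p.2 ≠ 0

/-- Two (nonzero) vectors of `k²` define the same point of `P^1`. -/
def ProjEq (u v : k × k) : Prop := u.1 * v.2 = u.2 * v.1

/-- Two representatives define the same point of `P^1 × P^1`. -/
def PtEq (p q : (k × k) × (k × k)) : Prop := ProjEq k p.1 q.1 ∧ ProjEq k p.2 q.2

/-- The bihomogeneous ideal of the point `[a0:a1] × [b0:b1]`, namely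
`(a1*x0 - a0*x1, b1*y0 - b0*y1)`. -/
def pointIdeal (p : (k × k) × (k × k)) : Ideal (MvPolynomial (Fin 4) k) :=
  Ideal.span {C p.1.2 * X 0 - C p.1.1 * X 1, C p.2.2 * X 2 - C p.2.1 * X 3}

/-- The ideal `I(Z) = ∩ I(P_i)` of a finite tuple of points. -/
def idealOfPoints {s : ℕ} (Z : Fin s → (k × k) × (k × k)) :
    Ideal (MvPolynomial (Fin 4) k) :=
  ⨅ i, pointIdeal k (Z i)

/-- The `m`-th symbolic power `I(Z)^(m) = ∩ I(P_i)^m`. -/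
def symbolicPower {s : ℕ} (Z : Fin s → (k × k) × (k × k)) (m : ℕ) :
    Ideal (MvPolynomial (Fin 4) k) :=
  ⨅ i, (pointIdeal k (Z i)) ^ m

/-- The bigraded piece `J_(i,j)` of a bihomogeneous ideal, as a `k`-subspace. -/
def bipiece (J : Ideal (MvPolynomial (Fin 4) k)) (d : ℕ × ℕ) :
    Submodule k (MvPolynomial (Fin 4) k) :=
  (Submodule.restrictScalars k J) ⊓ (weightedHomogeneousSubmodule k w4 d)

/-- `α(J)`: the least total degree `t = i + j` in which `J` has a nonzero
bihomogeneous element of bidegree `(i,j)`. -/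
def alpha (J : Ideal (MvPolynomial (Fin 4) k)) : ℕ :=
  sInf {t | ∃ F ∈ J, F ≠ 0 ∧ ∃ d : ℕ × ℕ, d.1 + d.2 = t ∧ F.IsWeightedHomogeneous w4 d}

/-- The coordinates of a tuple of points of `P^1 × P^1`, as a point of affine `4s`-space. -/
def coordsOf {s : ℕ} (Z : Fin s → (k × k) × (k × k)) : Fin s × Fin 4 → k :=
  fun p => ![(Z p.1).1.1, (Z p.1).1.2, (Z p.1).2.1, (Z p.1).2.2] p.2

/-- The weights making `k[(P^1 × P^1)^s]` multigraded. -/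
def wProd (s : ℕ) : Fin s × Fin 4 → (Fin s → ℕ × ℕ) := fun p => Pi.single p.1 (w4 p.2)

/-- `GeneralPosition k s P` says that property `P` holds for `s` general points of
`P^1 × P^1`: there is a nonempty Zariski-open subset `U` of `(P^1 × P^1)^s` (the
complement of the zero locus of a multihomogeneous form `G` not vanishing identically)
such that `P` holds for every tuple of pairwise distinct points lying in `U`. -/
def GeneralPosition (s : ℕ) (P : (Fin s → (k × k) × (k × k)) → Prop) : Prop :=
  ∃ (G : MvPolynomial (Fin s × Fin 4) k) (d : Fin s → ℕ × ℕ),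
    G.IsWeightedHomogeneous (wProd s) d ∧
    (∃ Z : Fin s → (k × k) × (k × k), (∀ i, IsPtRep k (Z i)) ∧ eval (coordsOf k Z) G ≠ 0) ∧
    ∀ Z : Fin s → (k × k) × (k × k), (∀ i, IsPtRep k (Z i)) →
      (∀ i j, i ≠ j → ¬ PtEq k (Z i) (Z j)) →
      eval (coordsOf k Z) G ≠ 0 → P Z

/-- Distinct points in multiplicity 1 generic position: every subset `S` imposes
independent conditions in every bidegree, i.e.
`dim_k I(S)_(i,j) = max {0, (i+1)(j+1) - |S|}`. -/
def Mult1Generic {s : ℕ} (Z : Fin s → (k × k) × (k × k)) : Prop :=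
  (∀ i, IsPtRep k (Z i)) ∧ (∀ i j, i ≠ j → ¬ PtEq k (Z i) (Z j)) ∧
  ∀ (S : Finset (Fin s)) (i j : ℕ),
    Module.finrank k ↥(bipiece k (⨅ a ∈ S, pointIdeal k (Z a)) (i, j))
      = (i + 1) * (j + 1) - S.card


section Aux

variable {k : Type*} [Field k]

instance gradedW4 : GradedAlgebra (weightedHomogeneousSubmodule k w4) :=
  weightedGradedAlgebra k w4

lemma weight_w4 (v : Fin 4 →₀ ℕ) :
    (Finsupp.weight w4) v = (v 0 + v 1, v 2 + v 3) := by
  rw [Finsupp.weight_apply, Finsupp.sum_fintype]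
  · simp [Fin.sum_univ_four, w4, Prod.ext_iff]
  · intro i; simp

instance whs_findim (d : ℕ × ℕ) :
    FiniteDimensional k (weightedHomogeneousSubmodule k w4 d) := by
  classical
  set N := d.1 + d.2 with hN
  have hfin : {m : Fin 4 →₀ ℕ | ∀ i, m i ≤ N}.Finite := by
    have h1 : {f : Fin 4 → ℕ | ∀ i, f i ≤ N}.Finite := by
      apply (Set.Finite.pi (fun _ : Fin 4 => Set.finite_Iic N)).subset
      intro f hf
      simp only [Set.mem_pi, Set.mem_univ, Set.mem_Iic, forall_true_left]
      exact hf
    have heq : {m : Fin 4 →₀ ℕ | ∀ i, m i ≤ N}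
        = ⇑(Finsupp.equivFunOnFinite (α := Fin 4) (M := ℕ)) ⁻¹' {f | ∀ i, f i ≤ N} := rfl
    rw [heq]
    exact Set.Finite.preimage (Equiv.injective _).injOn h1
  haveI : FiniteDimensional k
      (Submodule.span k ((fun m => (monomial m (1:k))) '' {m : Fin 4 →₀ ℕ | ∀ i, m i ≤ N})) :=
    FiniteDimensional.span_of_finite k (hfin.image _)
  apply Submodule.finiteDimensional_of_le
    (S₂ := Submodule.span k ((fun m => (monomial m (1:k))) '' {m : Fin 4 →₀ ℕ | ∀ i, m i ≤ N}))
  intro p hp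
  rw [mem_weightedHomogeneousSubmodule] at hp
  rw [← p.support_sum_monomial_coeff]
  apply Submodule.sum_mem
  intro v hv
  have hw := hp (mem_support_iff.mp hv)
  rw [weight_w4] at hw
  have hv4 : ∀ i, v i ≤ N := by
    intro i
    have h1 : v 0 + v 1 = d.1 := congrArg Prod.fst hw
    have h2 : v 2 + v 3 = d.2 := congrArg Prod.snd hw
    fin_cases i
    · show v 0 ≤ N; omega
    · show v 1 ≤ N; omega
    · show v 2 ≤ N; omega
    · show v 3 ≤ N; omega
  have hm : monomial v (coeff v p) = (coeff v p) • monomial v (1:k) := by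
    rw [smul_monomial, smul_eq_mul, mul_one]
  rw [hm]
  exact Submodule.smul_mem _ _ (Submodule.subset_span ⟨v, hv4, rfl⟩)

instance bipiece_findim (J : Ideal (MvPolynomial (Fin 4) k)) (d : ℕ × ℕ) :
    FiniteDimensional k (bipiece k J d) :=
  Submodule.finiteDimensional_of_le inf_le_right

lemma isWH_CX (c : k) (i : Fin 4) :
    IsWeightedHomogeneous w4 (C c * X i : MvPolynomial (Fin 4) k) (w4 i) := by
  have := (isWeightedHomogeneous_C w4 c).mul (isWeightedHomogeneous_X k w4 i)
  rwa [zero_add] at this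

lemma pointIdeal_isHomogeneous (p : (k × k) × (k × k)) :
    (pointIdeal k p).IsHomogeneous (weightedHomogeneousSubmodule k w4) := by
  apply Ideal.homogeneous_span
  rintro x hx
  rcases hx with rfl | rfl
  · exact ⟨(1,0), Submodule.sub_mem _ (isWH_CX p.1.2 0) (isWH_CX p.1.1 1)⟩
  · exact ⟨(0,1), Submodule.sub_mem _ (isWH_CX p.2.2 2) (isWH_CX p.2.1 3)⟩

lemma finrank_mul_le (A B : Submodule k (MvPolynomial (Fin 4) k))
    [FiniteDimensional k A] [FiniteDimensional k B] :
    Module.finrank k ↥(A * B) ≤ Module.finrank k A * Module.finrank k B := by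
  classical
  set m := Module.finrank k A
  set n := Module.finrank k B
  let a := Module.finBasis k A
  let b := Module.finBasis k B
  have hA : A = Submodule.span k (Set.range fun i => (a i : MvPolynomial (Fin 4) k)) := by
    conv_lhs => rw [← Submodule.map_subtype_top A, ← a.span_eq, Submodule.map_span]
    rw [← Set.range_comp]
    rfl
  have hB : B = Submodule.span k (Set.range fun i => (b i : MvPolynomial (Fin 4) k)) := by
    conv_lhs => rw [← Submodule.map_subtype_top B, ← b.span_eq, Submodule.map_span]
    rw [← Set.range_comp]
    rfl
  set T : Finset (MvPolynomial (Fin 4) k) :=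
    Finset.image (fun p : Fin m × Fin n =>
      (a p.1 : MvPolynomial (Fin 4) k) * (b p.2 : MvPolynomial (Fin 4) k)) Finset.univ with hT
  have hAB : A * B ≤ Submodule.span k (T : Set (MvPolynomial (Fin 4) k)) := by
    rw [hA, hB, Submodule.span_mul_span]
    apply Submodule.span_mono
    rintro z hz
    rcases Set.mem_mul.mp hz with ⟨x, ⟨i, rfl⟩, y, ⟨j, rfl⟩, rfl⟩
    exact Finset.mem_coe.mpr (Finset.mem_image.mpr ⟨(i, j), Finset.mem_univ _, rfl⟩)
  haveI : FiniteDimensional k (Submodule.span k (T : Set (MvPolynomial (Fin 4) k))) :=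
    FiniteDimensional.span_of_finite k T.finite_toSet
  calc Module.finrank k ↥(A * B)
      ≤ Module.finrank k (Submodule.span k (T : Set (MvPolynomial (Fin 4) k))) :=
        Submodule.finrank_mono hAB
    _ ≤ T.card := finrank_span_finset_le_card T
    _ ≤ m * n := by
        refine Finset.card_image_le.trans ?_
        simp

end Aux

/-- For `s ≥ 7` points of `P^1 × P^1` in multiplicity 1 generic
position, with `s = 2q1 + r1` (`0 ≤ r1 ≤ 1`) and `s = 3q2 + r2` (`0 ≤ r2 ≤ 2`),
`dim_k (I^2)_(3, q1+q2) ≤ (2 - r1)(3 - r2)`. -/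
theorem square_piece_dim_bound {k : Type*} [Field k] [IsAlgClosed k]
    (s : ℕ) (hs : 7 ≤ s)
    (Z : Fin s → (k × k) × (k × k)) (hZ : Mult1Generic k Z)
    (q1 r1 q2 r2 : ℕ)
    (hq1 : s = 2 * q1 + r1) (hr1 : r1 ≤ 1)
    (hq2 : s = 3 * q2 + r2) (hr2 : r2 ≤ 2) :
    Module.finrank k ↥(bipiece k (idealOfPoints k Z ^ 2) (3, q1 + q2))
      ≤ (2 - r1) * (3 - r2) := by
  classical
  obtain ⟨hrep, hdist, hdim⟩ := hZ
  have hIeq : (⨅ a ∈ (Finset.univ : Finset (Fin s)), pointIdeal k (Z a))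
      = idealOfPoints k Z := by
    simp [idealOfPoints]
  have hdimI : ∀ a b : ℕ,
      Module.finrank k ↥(bipiece k (idealOfPoints k Z) (a, b)) = (a+1)*(b+1) - s := by
    intro a b
    have h := hdim Finset.univ a b
    rwa [hIeq, Finset.card_univ, Fintype.card_fin] at h
  have hzero : ∀ a b : ℕ, (a+1)*(b+1) ≤ s → bipiece k (idealOfPoints k Z) (a, b) = ⊥ := by
    intro a b h
    have h0 : Module.finrank k ↥(bipiece k (idealOfPoints k Z) (a, b)) = 0 := by
      rw [hdimI a b]; omega
    exact Submodule.finrank_eq_zero.mp h0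
  have hIhom : (idealOfPoints k Z).IsHomogeneous (weightedHomogeneousSubmodule k w4) :=
    Ideal.IsHomogeneous.iInf fun i => pointIdeal_isHomogeneous (Z i)
  set A := bipiece k (idealOfPoints k Z) (1, q1) with hA
  set B := bipiece k (idealOfPoints k Z) (2, q2) with hB
  have key : bipiece k (idealOfPoints k Z ^ 2) (3, q1 + q2) ≤ A * B := by
    intro F hF
    rw [bipiece, Submodule.mem_inf] at hF
    obtain ⟨hF1, hF2⟩ := hF
    rw [Submodule.restrictScalars_mem, pow_two] at hF1
    rw [mem_weightedHomogeneousSubmodule] at hF2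
    have hcomp : weightedHomogeneousComponent w4 (3, q1+q2) F ∈ A * B := by
      refine Submodule.mul_induction_on hF1 ?_ ?_
      · intro m hm n hn
        rw [← DirectSum.sum_support_decompose (weightedHomogeneousSubmodule k w4) m,
            ← DirectSum.sum_support_decompose (weightedHomogeneousSubmodule k w4) n,
            Finset.sum_mul_sum, map_sum]
        refine Submodule.sum_mem _ fun d _ => ?_
        rw [map_sum]
        refine Submodule.sum_mem _ fun e _ => ?_
        have hmd : ((DirectSum.decompose (weightedHomogeneousSubmodule k w4) m d :
            weightedHomogeneousSubmodule k w4 d) : MvPolynomial (Fin 4) k)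
            ∈ idealOfPoints k Z := hIhom d hm
        have hne : ((DirectSum.decompose (weightedHomogeneousSubmodule k w4) n e :
            weightedHomogeneousSubmodule k w4 e) : MvPolynomial (Fin 4) k)
            ∈ idealOfPoints k Z := hIhom e hn
        have hmdh : IsWeightedHomogeneous w4
            ((DirectSum.decompose (weightedHomogeneousSubmodule k w4) m d :
              weightedHomogeneousSubmodule k w4 d) : MvPolynomial (Fin 4) k) d :=
          (DirectSum.decompose (weightedHomogeneousSubmodule k w4) m d).2
        have hneh : IsWeightedHomogeneous w4
            ((DirectSum.decompose (weightedHomogeneousSubmodule k w4) n e :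
              weightedHomogeneousSubmodule k w4 e) : MvPolynomial (Fin 4) k) e :=
          (DirectSum.decompose (weightedHomogeneousSubmodule k w4) n e).2
        have hprod := hmdh.mul hneh
        by_cases hde : d + e = (3, q1 + q2)
        · rw [hde] at hprod
          rw [hprod.weightedHomogeneousComponent_same]
          have hmdB : _ ∈ bipiece k (idealOfPoints k Z) d := Submodule.mem_inf.mpr ⟨hmd, hmdh⟩
          have hneB : _ ∈ bipiece k (idealOfPoints k Z) e := Submodule.mem_inf.mpr ⟨hne, hneh⟩
          obtain ⟨d1, d2⟩ := d
          obtain ⟨e1, e2⟩ := e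
          have h1 : d1 + e1 = 3 := congrArg Prod.fst hde
          have h2 : d2 + e2 = q1 + q2 := congrArg Prod.snd hde
          have hd1le : d1 ≤ 3 := by omega
          interval_cases d1
          · rw [hzero 0 d2 (by omega), Submodule.mem_bot] at hmdB
            rw [hmdB, zero_mul]
            exact Submodule.zero_mem _
          · have he1 : e1 = 2 := by omega
            subst he1
            rcases Nat.lt_trichotomy d2 q1 with h' | h' | h'
            · rw [hzero 1 d2 (by omega), Submodule.mem_bot] at hmdB
              rw [hmdB, zero_mul]
              exact Submodule.zero_mem _
            · have he2 : e2 = q2 := by omega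
              subst h'
              subst he2
              exact Submodule.mul_mem_mul hmdB hneB
            · rw [hzero 2 e2 (by omega), Submodule.mem_bot] at hneB
              rw [hneB, mul_zero]
              exact Submodule.zero_mem _
          · have he1 : e1 = 1 := by omega
            subst he1
            rcases Nat.lt_trichotomy d2 q2 with h' | h' | h'
            · rw [hzero 2 d2 (by omega), Submodule.mem_bot] at hmdB
              rw [hmdB, zero_mul]
              exact Submodule.zero_mem _
            · have he2 : e2 = q1 := by omega
              subst h'
              subst he2
              have hcm : (((DirectSum.decompose (weightedHomogeneousSubmodule k w4) m (2, d2) :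
                  weightedHomogeneousSubmodule k w4 (2, d2)) : MvPolynomial (Fin 4) k) *
                  ((DirectSum.decompose (weightedHomogeneousSubmodule k w4) n (1, e2) :
                  weightedHomogeneousSubmodule k w4 (1, e2)) : MvPolynomial (Fin 4) k)) =
                  _ * _ := mul_comm _ _
              rw [hcm]
              exact Submodule.mul_mem_mul hneB hmdB
            · rw [hzero 1 e2 (by omega), Submodule.mem_bot] at hneB
              rw [hneB, mul_zero]
              exact Submodule.zero_mem _
          · have he1 : e1 = 0 := by omega
            subst he1
            rw [hzero 0 e2 (by omega), Submodule.mem_bot] at hneB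
            rw [hneB, mul_zero]
            exact Submodule.zero_mem _
        · rw [hprod.weightedHomogeneousComponent_ne (3, q1 + q2) (Ne.symm hde)]
          exact Submodule.zero_mem _
      · intro x y hx hy
        rw [map_add]
        exact Submodule.add_mem _ hx hy
    rwa [hF2.weightedHomogeneousComponent_same] at hcomp
  haveI hABfin : FiniteDimensional k ↥(A * B) := by
    apply Submodule.finiteDimensional_of_le
      (S₂ := weightedHomogeneousSubmodule k w4 (3, q1 + q2))
    refine le_trans (mul_le_mul' inf_le_right inf_le_right) ?_
    have h := weightedHomogeneousSubmodule_mul (R := k) w4 ((1, q1) : ℕ × ℕ) ((2, q2) : ℕ × ℕ)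
    have heq : ((1, q1) : ℕ × ℕ) + (2, q2) = (3, q1 + q2) := by
      simp [Prod.ext_iff]
    rwa [heq] at h
  have hAr : Module.finrank k ↥A = 2 - r1 := by rw [hA, hdimI 1 q1]; omega
  have hBr : Module.finrank k ↥B = 3 - r2 := by rw [hB, hdimI 2 q2]; omega
  calc Module.finrank k ↥(bipiece k (idealOfPoints k Z ^ 2) (3, q1 + q2))
      ≤ Module.finrank k ↥(A * B) := Submodule.finrank_mono key
    _ ≤ Module.finrank k ↥A * Module.finrank k ↥B := finrank_mul_le A B
    _ = (2 - r1) * (3 - r2) := by rw [hAr, hBr]
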